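/- For n ∈ ℕ and 2^m < n ≤ 2^{m+1}, and any integrable f on G, the identity σ_n^κ(S_{2^m}f) − S_{2^m}f = (2^m/n)·S_{2^m}(σ_{2^m}f − f) holds, where σ_n^κ denotes the n-th Walsh-Kaczmarz-Fejér mean. -/

import Mathlib

open MeasureTheory Filter Finset
open scoped ENNReal NNReal

/-- The Walsh group `G = ∏ ℤ₂`. -/
abbrev WG := ℕ → ZMod 2

noncomputable section

/-- The `k`-th Rademacher function `r_k(x) = (-1)^{x_k}`. -/
def rad (k : ℕ) (x : WG) : ℝ := (-1 : ℝ) ^ (x k).val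

/-- The Walsh-Paley function `w_n(x) = (-1)^{∑ n_k x_k}`. -/
def walsh (n : ℕ) (x : WG) : ℝ :=
  (-1 : ℝ) ^ (∑ k ∈ Finset.range (n + 1), if n.testBit k then (x k).val else 0)

/-- The Walsh-Kaczmarz function
`κ_n(x) = r_{|n|}(x)·(-1)^{∑_{k<|n|} n_k x_{|n|-1-k}}`, `κ_0 = 1`,
where `|n| = Nat.log 2 n` is the position of the leading binary digit. -/
def kacz (n : ℕ) (x : WG) : ℝ :=
  if n = 0 then 1 else
    rad (Nat.log 2 n) x *
      (-1 : ℝ) ^ (∑ k ∈ Finset.range (Nat.log 2 n),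
        if n.testBit k then (x (Nat.log 2 n - 1 - k)).val else 0)

/-- Walsh-Paley Dirichlet kernel. -/
def Dw (n : ℕ) (x : WG) : ℝ := ∑ k ∈ Finset.range n, walsh k x

/-- Walsh-Kaczmarz Dirichlet kernel. -/
def Dk (n : ℕ) (x : WG) : ℝ := ∑ k ∈ Finset.range n, kacz k x

/-- Walsh-Fejér kernel `K_n = (1/n) ∑_{k=1}^n D_k`. -/
def Kw (n : ℕ) (x : WG) : ℝ := (1 / n : ℝ) * ∑ k ∈ Finset.Icc 1 n, Dw k x

/-- The transformation reversing the first `A` coordinates. -/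
def tau (A : ℕ) (x : WG) : WG := fun k => if k < A then x (A - 1 - k) else x k

/-- The dyadic interval (cylinder) `I_n(x)`. -/
def cyl (n : ℕ) (x : WG) : Set WG := {y | ∀ k < n, y k = x k}

/-- `I_n = I_n(0)`. -/
def In (n : ℕ) : Set WG := cyl n 0

/-- A measure `μ` on `WG` is the Haar (product) measure iff every cylinder of
level `n` has measure `2⁻ⁿ`. -/
def IsHaar (μ : Measure WG) : Prop :=
  ∀ (n : ℕ) (x : WG), μ (cyl n x) = (2 : ℝ≥0∞)⁻¹ ^ n

/-- Walsh-Fourier coefficient. -/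
def fhatW (μ : Measure WG) (f : WG → ℝ) (j : ℕ) : ℝ := ∫ x, f x * walsh j x ∂μ

/-- Walsh-Fourier partial sum `S_N f`. -/
def partialW (μ : Measure WG) (N : ℕ) (f : WG → ℝ) (x : WG) : ℝ :=
  ∑ j ∈ Finset.range N, fhatW μ f j * walsh j x

/-- Walsh-Kaczmarz-Fourier coefficient. -/
def fhatK (μ : Measure WG) (f : WG → ℝ) (j : ℕ) : ℝ := ∫ x, f x * kacz j x ∂μ

/-- Walsh-Kaczmarz-Fourier partial sum `S_N^κ f`. -/
def partialK (μ : Measure WG) (N : ℕ) (f : WG → ℝ) (x : WG) : ℝ :=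
  ∑ j ∈ Finset.range N, fhatK μ f j * kacz j x

/-- Walsh-Kaczmarz-Fejér mean `σ_n^κ f`. -/
def sigmaK (μ : Measure WG) (n : ℕ) (f : WG → ℝ) (x : WG) : ℝ :=
  (1 / n : ℝ) * ∑ j ∈ Finset.Icc 1 n, partialK μ j f x

end

/-! The Walsh–Kaczmarz system is a rearrangement of the Walsh–Paley system within each dyadic
block: `κ_i = w_{ρ i}`, where `ρ` (`kaczIndex`) reverses the binary digits of `i` below the
leading one. Since `ρ` is an involution preserving `[0, 2^m)`, the mean `σ_n^κ (S_{2^m} f)` for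
`n ≥ 2^m` and the mean `σ_{2^m}^κ f` are Walsh polynomials of degree `< 2^m` with coefficients
`(1 - ρ l / n) f̂ l` and `(1 - ρ l / 2^m) f̂ l`. By orthonormality of the Walsh functions the
identity then reduces to `-(ρ l / n) = (2^m / n) · (-(ρ l / 2^m))` for each `l < 2^m`. -/

lemma testBit_eq_false_of_lt_two_pow {i t k : ℕ} (h : i < 2 ^ t) (hk : t ≤ k) :
    i.testBit k = false :=
  Nat.testBit_lt_two_pow (h.trans_le (Nat.pow_le_pow_right (by norm_num) hk))

lemma testBit_log_two_self {i : ℕ} (hi : i ≠ 0) : i.testBit (Nat.log 2 i) = true := by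
  rw [← Nat.log2_eq_log_two]
  exact Nat.testBit_log2 hi

def kaczIndex (i : ℕ) : ℕ :=
  Nat.ofBits fun t : Fin (Nat.log 2 i + 1) =>
    if (t : ℕ) < Nat.log 2 i then i.testBit (Nat.log 2 i - 1 - t) else i.testBit t

lemma testBit_kaczIndex (i k : ℕ) :
    (kaczIndex i).testBit k =
      if k < Nat.log 2 i then i.testBit (Nat.log 2 i - 1 - k) else i.testBit k := by
  rw [kaczIndex, Nat.testBit_ofBits]
  by_cases hk : k < Nat.log 2 i + 1
  · rw [dif_pos hk]
  · rw [dif_neg hk, if_neg (by omega), testBit_eq_false_of_lt_two_pow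
      (Nat.lt_pow_succ_log_self (by norm_num) i) (not_lt.1 hk)]

lemma kaczIndex_zero : kaczIndex 0 = 0 :=
  Nat.eq_of_testBit_eq fun k => by simp [testBit_kaczIndex]

lemma log_kaczIndex (i : ℕ) : Nat.log 2 (kaczIndex i) = Nat.log 2 i := by
  rcases eq_or_ne i 0 with rfl | hi
  · rw [kaczIndex_zero]
  apply Nat.log_eq_of_pow_le_of_lt_pow
  · apply Nat.ge_two_pow_of_testBit
    rw [testBit_kaczIndex, if_neg (lt_irrefl _)]
    exact testBit_log_two_self hi
  · refine Nat.lt_pow_two_of_testBit _ fun k hk => ?_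
    rw [testBit_kaczIndex, if_neg (by omega)]
    exact testBit_eq_false_of_lt_two_pow (Nat.lt_pow_succ_log_self (by norm_num) i) hk

lemma kaczIndex_involutive : Function.Involutive kaczIndex := by
  intro i
  refine Nat.eq_of_testBit_eq fun k => ?_
  rw [testBit_kaczIndex, log_kaczIndex]
  split_ifs with hk
  · rw [testBit_kaczIndex, if_pos (by omega), Nat.sub_sub_self (by omega)]
  · rw [testBit_kaczIndex, if_neg hk]

lemma kaczIndex_lt_two_pow {i t : ℕ} (h : i < 2 ^ t) : kaczIndex i < 2 ^ t := by
  refine Nat.lt_pow_two_of_testBit _ fun k hk => ?_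
  have hlog : Nat.log 2 i ≤ t := by simpa using Nat.log_mono_right (b := 2) h.le
  rw [testBit_kaczIndex, if_neg (by omega)]
  exact testBit_eq_false_of_lt_two_pow h hk

lemma kaczIndex_lt_two_pow_iff {i t : ℕ} : kaczIndex i < 2 ^ t ↔ i < 2 ^ t :=
  ⟨fun h => kaczIndex_involutive i ▸ kaczIndex_lt_two_pow h, kaczIndex_lt_two_pow⟩

lemma sum_range_two_pow_comp_kaczIndex {M : Type*} [AddCommMonoid M] (t : ℕ) (F : ℕ → M) :
    ∑ i ∈ range (2 ^ t), F (kaczIndex i) = ∑ i ∈ range (2 ^ t), F i :=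
  Finset.sum_nbij' kaczIndex kaczIndex
    (fun _ h => mem_range.2 (kaczIndex_lt_two_pow (mem_range.1 h)))
    (fun _ h => mem_range.2 (kaczIndex_lt_two_pow (mem_range.1 h)))
    (fun i _ => kaczIndex_involutive i) (fun i _ => kaczIndex_involutive i) (fun _ _ => rfl)

lemma sum_range_ite_testBit {β : Type*} [AddCommMonoid β] (a : ℕ → β) {n M N : ℕ}
    (hn : n < 2 ^ M) (hMN : M ≤ N) :
    ∑ k ∈ range N, (if n.testBit k then a k else 0) =
      ∑ k ∈ range M, (if n.testBit k then a k else 0) := by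
  refine (Finset.sum_subset (range_subset_range.2 hMN) fun k _ hk => ?_).symm
  rw [testBit_eq_false_of_lt_two_pow hn (not_lt.1 (mem_range.not.1 hk)), if_neg Bool.false_ne_true]

lemma walsh_eq_prod_range {n M : ℕ} (hn : n < 2 ^ M) (x : WG) :
    walsh n x = ∏ k ∈ range M, (-1 : ℝ) ^ (if n.testBit k then (x k).val else 0) := by
  have hmin : n < 2 ^ min M n := by
    rcases min_choice M n with h | h <;> rw [h]
    exacts [hn, Nat.lt_two_pow_self]
  rw [walsh, Finset.prod_pow_eq_pow_sum, sum_range_ite_testBit _ hmin (by omega),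
    sum_range_ite_testBit _ hmin (min_le_left _ _)]

@[simp]
lemma walsh_zero (x : WG) : walsh 0 x = 1 := by
  simp [walsh]

lemma walsh_mul_walsh (a b : ℕ) (x : WG) : walsh a x * walsh b x = walsh (a ^^^ b) x := by
  have ha : a < 2 ^ (a + b) :=
    Nat.lt_two_pow_self.trans_le (Nat.pow_le_pow_right (by norm_num) (by omega))
  have hb : b < 2 ^ (a + b) :=
    Nat.lt_two_pow_self.trans_le (Nat.pow_le_pow_right (by norm_num) (by omega))
  rw [walsh_eq_prod_range ha, walsh_eq_prod_range hb,
    walsh_eq_prod_range (Nat.xor_lt_two_pow ha hb), ← Finset.prod_mul_distrib]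
  refine Finset.prod_congr rfl fun k _ => ?_
  rw [← pow_add]
  cases ha : a.testBit k <;> cases hb : b.testBit k <;> simp [Nat.testBit_xor, ha, hb]

lemma kacz_eq_walsh_kaczIndex (i : ℕ) (x : WG) : kacz i x = walsh (kaczIndex i) x := by
  rcases eq_or_ne i 0 with rfl | hi
  · simp [kacz, kaczIndex_zero]
  have hlt : kaczIndex i < 2 ^ (Nat.log 2 i + 1) :=
    kaczIndex_lt_two_pow_iff.2 (Nat.lt_pow_succ_log_self (by norm_num) i)
  rw [kacz, if_neg hi, walsh_eq_prod_range hlt, Finset.prod_range_succ, testBit_kaczIndex,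
    if_neg (lt_irrefl _), testBit_log_two_self hi, if_pos rfl, rad, mul_comm,
    ← Finset.prod_pow_eq_pow_sum, ← Finset.prod_range_reflect]
  congr 1
  refine Finset.prod_congr rfl fun k hk => ?_
  have hk : k < Nat.log 2 i := mem_range.1 hk
  rw [testBit_kaczIndex, if_pos hk, Nat.sub_sub_self (by omega : k ≤ Nat.log 2 i - 1)]

lemma measurable_walsh (n : ℕ) : Measurable (walsh n) := by
  have hexp : Measurable fun x : WG =>
      ∑ k ∈ range (n + 1), if n.testBit k then (x k).val else 0 :=
    Finset.measurable_sum _ fun k _ => by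
      split_ifs
      exacts [Measurable.of_discrete.comp (measurable_pi_apply k), measurable_const]
  exact Measurable.of_discrete.comp hexp

lemma norm_walsh (n : ℕ) (x : WG) : ‖walsh n x‖ = 1 := by
  simp [walsh]

lemma integrable_walsh {μ : Measure WG} [IsFiniteMeasure μ] (n : ℕ) : Integrable (walsh n) μ :=
  .of_bound (measurable_walsh n).aestronglyMeasurable 1 (.of_forall fun x => (norm_walsh n x).le)

lemma MeasureTheory.Integrable.mul_walsh {μ : Measure WG} {f : WG → ℝ} (hf : Integrable f μ)
    (n : ℕ) : Integrable (fun x => f x * walsh n x) μ :=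
  hf.mul_bdd (measurable_walsh n).aestronglyMeasurable (.of_forall fun x => (norm_walsh n x).le)

lemma measurableSet_cyl (M : ℕ) (x : WG) : MeasurableSet (cyl M x) := by
  have : cyl M x = ⋂ k ∈ Set.Iio M, (fun y : WG => y k) ⁻¹' {x k} := by
    ext y; simp [cyl]
  rw [this]
  exact .biInter (Set.to_countable _) fun k _ => measurable_pi_apply k (measurableSet_singleton _)

namespace IsHaar

variable {μ : Measure WG}

lemma isProbabilityMeasure (hμ : IsHaar μ) : IsProbabilityMeasure μ :=
  ⟨by simpa [cyl] using hμ 0 0⟩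

lemma integral_eq_sum_of_dependsOn (hμ : IsHaar μ) {M : ℕ} {g : WG → ℝ} (hg : Integrable g μ)
    (hgM : DependsOn g (Set.Iio M)) :
    ∫ x, g x ∂μ =
      (2⁻¹ : ℝ) ^ M * ∑ z : Fin M → ZMod 2, g fun k => if h : k < M then z ⟨k, h⟩ else 0 := by
  set e : (Fin M → ZMod 2) → WG := fun z k => if h : k < M then z ⟨k, h⟩ else 0
  have hcover : (⋃ z, cyl M (e z)) = Set.univ :=
    Set.eq_univ_of_forall fun y => Set.mem_iUnion.2 ⟨fun k => y k, fun k hk => by simp [e, hk]⟩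
  have hdisj : Pairwise (Function.onFun Disjoint fun z => cyl M (e z)) := by
    refine fun z z' hne => Set.disjoint_left.2 fun y hy hy' => hne (funext fun k => ?_)
    simpa [e, k.2] using (hy k k.2).symm.trans (hy' k k.2)
  have hconst : ∀ z, ∫ x in cyl M (e z), g x ∂μ = (2⁻¹ : ℝ) ^ M * g (e z) := by
    intro z
    rw [setIntegral_congr_fun (measurableSet_cyl M (e z)) fun y hy => hgM fun k hk => hy k hk,
      setIntegral_const, measureReal_def, hμ, smul_eq_mul]
    simp
  rw [← setIntegral_univ, ← hcover, integral_iUnion (fun z => measurableSet_cyl M (e z)) hdisj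
    hg.integrableOn, tsum_fintype, Finset.mul_sum]
  exact Finset.sum_congr rfl fun z _ => hconst z

lemma integral_walsh (hμ : IsHaar μ) (n : ℕ) : ∫ x, walsh n x ∂μ = if n = 0 then 1 else 0 := by
  have := hμ.isProbabilityMeasure
  split_ifs with hn
  · simp [hn]
  have hdep : DependsOn (walsh n) (Set.Iio n) := fun x y hxy => by
    simp only [walsh_eq_prod_range Nat.lt_two_pow_self]
    exact Finset.prod_congr rfl fun k hk => by rw [hxy k (by simpa using hk)]
  rw [hμ.integral_eq_sum_of_dependsOn (integrable_walsh n) hdep, mul_eq_zero]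
  right
  simp only [walsh_eq_prod_range Nat.lt_two_pow_self, Finset.prod_range (n := n), Fin.is_lt,
    dite_true, Fin.eta]
  -- the sum factorizes, and the factor at the leading binary digit of `n` is `1 + (-1)`
  rw [← Fintype.prod_sum fun (k : Fin n) (a : ZMod 2) =>
    (-1 : ℝ) ^ (if n.testBit k then a.val else 0)]
  refine Finset.prod_eq_zero (i := ⟨Nat.log 2 n, Nat.log_lt_of_lt_pow hn Nat.lt_two_pow_self⟩)
    (mem_univ _) ?_
  simp only [testBit_log_two_self hn, if_true]
  exact (Fin.sum_univ_two fun a : Fin 2 => (-1 : ℝ) ^ (a : ZMod 2).val).trans (by norm_num)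

lemma integral_walsh_mul_walsh (hμ : IsHaar μ) (a b : ℕ) :
    ∫ x, walsh a x * walsh b x ∂μ = if a = b then 1 else 0 := by
  simp_rw [walsh_mul_walsh, hμ.integral_walsh, Nat.xor_eq_zero_iff]

end IsHaar

def walshPoly (s : Finset ℕ) (c : ℕ → ℝ) (x : WG) : ℝ := ∑ l ∈ s, c l * walsh l x

lemma partialW_eq_walshPoly (μ : Measure WG) (N : ℕ) (f : WG → ℝ) :
    partialW μ N f = walshPoly (range N) (fhatW μ f) := rfl

lemma integrable_walshPoly {μ : Measure WG} [IsFiniteMeasure μ] (s : Finset ℕ) (c : ℕ → ℝ) :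
    Integrable (walshPoly s c) μ :=
  integrable_finsetSum s fun l _ => (integrable_walsh l).const_mul (c l)

lemma IsHaar.fhatW_walshPoly {μ : Measure WG} (hμ : IsHaar μ) (s : Finset ℕ) (c : ℕ → ℝ)
    (k : ℕ) : fhatW μ (walshPoly s c) k = if k ∈ s then c k else 0 := by
  have := hμ.isProbabilityMeasure
  simp only [fhatW, walshPoly, Finset.sum_mul, mul_assoc]
  rw [integral_finsetSum s fun l _ => ((integrable_walsh l).mul_walsh k).const_mul (c l)]
  simp_rw [integral_const_mul, hμ.integral_walsh_mul_walsh, mul_ite, mul_one, mul_zero,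
    Finset.sum_ite_eq']

lemma fhatW_sub {μ : Measure WG} {f g : WG → ℝ} (hf : Integrable f μ) (hg : Integrable g μ)
    (k : ℕ) : fhatW μ (fun x => f x - g x) k = fhatW μ f k - fhatW μ g k := by
  simp only [fhatW, sub_mul]
  exact integral_sub (hf.mul_walsh k) (hg.mul_walsh k)

lemma sum_Icc_one_sum_range {R : Type*} [CommRing R] (n : ℕ) (T : ℕ → R) :
    ∑ j ∈ Icc 1 n, ∑ i ∈ range j, T i = ∑ i ∈ range n, ((n : R) - i) * T i := by
  induction n with
  | zero => simp
  | succ n ih =>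
    rw [Finset.sum_Icc_succ_top (by omega), ih]
    simp only [Nat.cast_succ, add_sub_right_comm _ (1 : R), add_mul, one_mul,
      Finset.sum_add_distrib, Finset.sum_range_succ (fun i => ((n : R) - i) * T i), sub_self,
      zero_mul, add_zero]

lemma sigmaK_eq_sum (μ : Measure WG) (n : ℕ) (f : WG → ℝ) (x : WG) :
    sigmaK μ n f x = ∑ i ∈ range n, (1 - i / n : ℝ) * (fhatK μ f i * kacz i x) := by
  simp only [sigmaK, partialK]
  rw [sum_Icc_one_sum_range, Finset.mul_sum]
  rcases eq_or_ne n 0 with rfl | hn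
  · simp
  refine Finset.sum_congr rfl fun i _ => ?_
  field_simp

lemma fhatK_eq_fhatW_kaczIndex (μ : Measure WG) (f : WG → ℝ) (i : ℕ) :
    fhatK μ f i = fhatW μ f (kaczIndex i) := by
  simp only [fhatK, fhatW, kacz_eq_walsh_kaczIndex]

lemma sigmaK_eq_walshPoly {μ : Measure WG} {m n : ℕ} (hmn : 2 ^ m ≤ n) (f : WG → ℝ)
    (hf : ∀ i, 2 ^ m ≤ i → i < n → fhatK μ f i = 0) :
    sigmaK μ n f =
      walshPoly (range (2 ^ m)) fun l => (1 - kaczIndex l / n : ℝ) * fhatW μ f l := by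
  funext x
  have htail : ∑ i ∈ range n, (1 - i / n : ℝ) * (fhatK μ f i * kacz i x) =
      ∑ i ∈ range (2 ^ m), (1 - i / n : ℝ) * (fhatK μ f i * kacz i x) := by
    refine (Finset.sum_subset (range_subset_range.2 hmn) fun i hi hi' => ?_).symm
    rw [hf i (not_lt.1 (mem_range.not.1 hi')) (mem_range.1 hi), zero_mul, mul_zero]
  rw [sigmaK_eq_sum, htail, walshPoly, ← sum_range_two_pow_comp_kaczIndex]
  refine Finset.sum_congr rfl fun i _ => ?_
  rw [fhatK_eq_fhatW_kaczIndex, kacz_eq_walsh_kaczIndex, kaczIndex_involutive i, mul_assoc]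

theorem fejer_partial_sum_identity_general (μ : Measure WG) (hμ : IsHaar μ) (m n : ℕ)
    (h1 : 2 ^ m < n) (f : WG → ℝ) (hf : Integrable f μ) (x : WG) :
    sigmaK μ n (partialW μ (2 ^ m) f) x - partialW μ (2 ^ m) f x =
      ((2 ^ m : ℝ) / n) *
        partialW μ (2 ^ m) (fun y => sigmaK μ (2 ^ m) f y - f y) x := by
  have := hμ.isProbabilityMeasure
  have hS : ∀ l, fhatW μ (partialW μ (2 ^ m) f) l = if l ∈ range (2 ^ m) then fhatW μ f l else 0 :=
    hμ.fhatW_walshPoly _ _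
  have hσS : sigmaK μ n (partialW μ (2 ^ m) f) =
      walshPoly (range (2 ^ m)) fun l => (1 - kaczIndex l / n : ℝ) * fhatW μ f l := by
    have hhigh : ∀ i, 2 ^ m ≤ i → i < n → fhatK μ (partialW μ (2 ^ m) f) i = 0 := fun i hi _ => by
      rw [fhatK_eq_fhatW_kaczIndex, hS,
        if_neg (mt mem_range.1 (kaczIndex_lt_two_pow_iff.not.2 hi.not_gt))]
    rw [sigmaK_eq_walshPoly h1.le _ hhigh]
    funext y
    exact Finset.sum_congr rfl fun l hl => by simp only [hS, if_pos hl]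
  have hσ : sigmaK μ (2 ^ m) f =
      walshPoly (range (2 ^ m)) fun l => (1 - kaczIndex l / 2 ^ m : ℝ) * fhatW μ f l := by
    simpa using sigmaK_eq_walshPoly (μ := μ) le_rfl f fun i hi hi' => absurd hi' hi.not_gt
  rw [hσS, partialW_eq_walshPoly, partialW_eq_walshPoly, hσ, walshPoly, walshPoly, walshPoly,
    Finset.mul_sum, ← Finset.sum_sub_distrib]
  refine Finset.sum_congr rfl fun l hl => ?_
  rw [fhatW_sub (integrable_walshPoly _ _) hf, hμ.fhatW_walshPoly, if_pos hl]
  field_simp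
  ring

/-- For `2^m < n ≤ 2^{m+1}`:
`σ_n^κ(S_{2^m}f) − S_{2^m}f = (2^m/n)·S_{2^m}(σ_{2^m}f − f)`. -/
theorem fejer_partial_sum_identity (μ : Measure WG) (hμ : IsHaar μ) (m n : ℕ)
    (h1 : 2 ^ m < n) (h2 : n ≤ 2 ^ (m + 1)) (f : WG → ℝ) (hf : Integrable f μ) (x : WG) :
    sigmaK μ n (partialW μ (2 ^ m) f) x - partialW μ (2 ^ m) f x =
      ((2 ^ m : ℝ) / n) *
        partialW μ (2 ^ m) (fun y => sigmaK μ (2 ^ m) f y - f y) x :=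
  fejer_partial_sum_identity_general μ hμ m n h1 f hf x
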